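/- arXiv:2011.11212 — 2 statements merged into one kernel-verified Lean document; each statement's English description precedes it below -/
import Mathlib

section
/- For any d × d complex matrix ρ with d = 2^n, (1/4^n) Σ_{r,s ∈ {0,1}^n} X^r Z^s ρ Z^s X^r = (Tr ρ / 2^n) · I. In particular, for a density matrix ρ the average over all n-qubit Pauli operators of P ρ P† is the maximally mixed state. -/
/-!
The Pauli operator factors as `X^r Z^s = X^r · Z^s`, a bit flip times a diagonal sign matrix.
Conjugating `ρ` by `Z^s` multiplies its `(i, j)` entry by `(-1)^(s·(i+j))`, so averaging over
`s` kills every off-diagonal entry by orthogonality of the characters of `(ZMod 2)^n`.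
Conjugating a diagonal matrix by `X^r` permutes its diagonal by `i ↦ r + i`, and averaging over
`r` spreads the trace evenly over the diagonal.
-/

/-- The `n`-qubit Pauli operator `X^r Z^s`. -/
def pauli (n : ℕ) (r s : Fin n → ZMod 2) :
    Matrix (Fin n → ZMod 2) (Fin n → ZMod 2) ℂ :=
  Matrix.of fun i j => if i = r + j then (-1 : ℂ) ^ (∑ k, s k * j k).val else 0

open Matrix

def signChar : AddChar (ZMod 2) ℂ where
  toFun a := (-1) ^ a.val
  map_zero_eq_one' := rfl
  map_add_eq_mul' a b := by rw [ZMod.val_add, ← neg_one_pow_eq_pow_mod_two, pow_add]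

lemma signChar_apply (a : ZMod 2) : signChar a = (-1) ^ a.val := rfl

lemma signChar_one : signChar 1 = -1 := by rw [signChar_apply, ZMod.val_one, pow_one]

section Walsh

variable {ι : Type*}

lemma neg_eq_self_zmod_two (v : ι → ZMod 2) : -v = v :=
  funext fun k => ZMod.neg_eq_self_mod_two (v k)

lemma eq_add_iff_eq_add_zmod_two {a b c : ι → ZMod 2} : a = b + c ↔ c = b + a := by
  rw [eq_comm (a := a), ← eq_neg_add_iff_add_eq, neg_eq_self_zmod_two]

variable [Fintype ι]

def walshChar (w : ι → ZMod 2) : AddChar (ι → ZMod 2) ℂ where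
  toFun s := signChar (s ⬝ᵥ w)
  map_zero_eq_one' := by simp
  map_add_eq_mul' s t := by rw [add_dotProduct, AddChar.map_add_eq_mul]

lemma walshChar_apply (w s : ι → ZMod 2) : walshChar w s = signChar (s ⬝ᵥ w) := rfl

lemma walshChar_eq_zero_iff {w : ι → ZMod 2} : walshChar w = 0 ↔ w = 0 := by
  classical
  refine ⟨fun h => ?_, by rintro rfl; ext s; simp [walshChar_apply]⟩
  by_contra hw
  obtain ⟨k, hk⟩ := Function.ne_iff.1 hw
  have hwk : w k = 1 := Fin.eq_one_of_ne_zero (w k) hk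
  have h_single := DFunLike.congr_fun h (Pi.single k 1)
  rw [walshChar_apply, single_dotProduct, one_mul, hwk, signChar_one, AddChar.zero_apply]
    at h_single
  norm_num at h_single

lemma sum_signChar_dotProduct [DecidableEq ι] (w : ι → ZMod 2) :
    ∑ s, signChar (s ⬝ᵥ w) = if w = 0 then (2 : ℂ) ^ Fintype.card ι else 0 := by
  simpa [walshChar_apply, walshChar_eq_zero_iff] using (walshChar w).sum_eq_ite

end Walsh

section Pauli

variable {n : ℕ}

lemma pauli_zero_left (s : Fin n → ZMod 2) :
    pauli n 0 s = diagonal fun j => signChar (s ⬝ᵥ j) := by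
  ext i j
  by_cases h : i = j <;> simp [pauli, signChar_apply, dotProduct, h]

lemma pauli_zero_right_apply (r i j : Fin n → ZMod 2) :
    pauli n r 0 i j = if i = r + j then 1 else 0 := by
  simp [pauli]

lemma pauli_eq_mul (r s : Fin n → ZMod 2) : pauli n r s = pauli n r 0 * pauli n 0 s := by
  ext i j
  rw [pauli_zero_left, mul_diagonal, pauli_zero_right_apply]
  simp [pauli, signChar_apply, dotProduct]

lemma pauli_zero_right_mul_apply (r : Fin n → ZMod 2)
    (M : Matrix (Fin n → ZMod 2) (Fin n → ZMod 2) ℂ) (i j : Fin n → ZMod 2) :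
    (pauli n r 0 * M) i j = M (r + i) j := by
  simp [mul_apply, pauli_zero_right_apply, eq_add_iff_eq_add_zmod_two (a := i)]

lemma mul_pauli_zero_right_apply (r : Fin n → ZMod 2)
    (M : Matrix (Fin n → ZMod 2) (Fin n → ZMod 2) ℂ) (i j : Fin n → ZMod 2) :
    (M * pauli n r 0) i j = M i (r + j) := by
  simp [mul_apply, pauli_zero_right_apply]

lemma sum_pauli_zero_left_conj (ρ : Matrix (Fin n → ZMod 2) (Fin n → ZMod 2) ℂ) :
    ∑ s, pauli n 0 s * ρ * pauli n 0 s = (2 : ℂ) ^ n • diagonal ρ.diag := by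
  ext i j
  have hsign (s : Fin n → ZMod 2) :
      signChar (s ⬝ᵥ i) * ρ i j * signChar (s ⬝ᵥ j) = ρ i j * signChar (s ⬝ᵥ (i + j)) := by
    rw [dotProduct_add, AddChar.map_add_eq_mul]
    ring
  have hij : i + j = 0 ↔ i = j := by
    rw [add_eq_zero_iff_eq_neg, neg_eq_self_zmod_two]
  simp only [pauli_zero_left, diagonal_mul, mul_diagonal, Matrix.sum_apply, Matrix.smul_apply,
    hsign, ← Finset.mul_sum, sum_signChar_dotProduct, hij, Fintype.card_fin]
  by_cases h : i = j
  · subst h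
    simp [mul_comm]
  · simp [h]

lemma sum_pauli_zero_right_conj_diagonal (d : (Fin n → ZMod 2) → ℂ) :
    ∑ r, pauli n r 0 * diagonal d * pauli n r 0 = (∑ i, d i) • 1 := by
  ext i j
  simp only [Matrix.sum_apply, mul_pauli_zero_right_apply, pauli_zero_right_mul_apply,
    diagonal_apply, add_right_inj, Matrix.smul_apply, one_apply]
  by_cases h : i = j
  · subst h
    simp only [if_true, smul_eq_mul, mul_one]
    exact Fintype.sum_equiv (Equiv.addRight i) _ _ fun _ => rfl
  · simp [h]

end Pauli

/-- the n-qubit Pauli group is a unitary 1-design: the average of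
`X^r Z^s ρ Z^s X^r` over all `r, s ∈ {0,1}^n` equals `(Tr ρ / 2^n) · I`. -/
theorem stmt_3 (n : ℕ) (ρ : Matrix (Fin n → ZMod 2) (Fin n → ZMod 2) ℂ) :
    ((4 : ℂ) ^ n)⁻¹ •
        ∑ r : Fin n → ZMod 2, ∑ s : Fin n → ZMod 2,
          pauli n r s * ρ * pauli n 0 s * pauli n r 0 =
      (ρ.trace / 2 ^ n) • (1 : Matrix (Fin n → ZMod 2) (Fin n → ZMod 2) ℂ) := by
  have hconj (r s : Fin n → ZMod 2) : pauli n r s * ρ * pauli n 0 s * pauli n r 0 =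
      pauli n r 0 * (pauli n 0 s * ρ * pauli n 0 s) * pauli n r 0 := by
    simp only [pauli_eq_mul r s, Matrix.mul_assoc]
  simp only [hconj, ← Matrix.mul_sum, ← Matrix.sum_mul, sum_pauli_zero_left_conj,
    Matrix.mul_smul, Matrix.smul_mul, ← Finset.smul_sum, sum_pauli_zero_right_conj_diagonal,
    smul_smul]
  congr 1
  rw [trace, show (4 : ℂ) = 2 * 2 by norm_num, mul_pow]
  field_simp
end

section
/- Let U be a unitary on H_A ⊗ H_B and |y₀⟩ ∈ H_B a fixed unit vector. Suppose that for every computational basis vector |i⟩ of H_A there is a unit vector |y_i⟩ ∈ H_B with U(|i⟩ ⊗ |0⟩) = |i⟩ ⊗ |y_i⟩, and that for every basis index i ≠ 0 there is a unit vector |y_{0,i}⟩ with U((|0⟩ + |i⟩)/√2 ⊗ |0⟩) = (|0⟩ + |i⟩)/√2 ⊗ |y_{0,i}⟩. Then all |y_i⟩ are equal up to phase to |y₀⟩, and hence there is a single unit vector |y⟩ ∈ H_B and phases such that for every vector |x⟩ ∈ H_A, U(|x⟩ ⊗ |0⟩) = |x'⟩ ⊗ |y⟩ where |x'⟩ agrees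 with |x⟩ up to relative phases; if moreover Tr_B of the output always equals |x⟩⟨x|, then U(|x⟩ ⊗ |0⟩) = |x⟩ ⊗ |y⟩ for all |x⟩. -/
/-- exact rigidity (no-cloning) lemma. If a unitary `U` on
`H_A ⊗ H_B` maps every computational basis state `|i⟩ ⊗ |0⟩` to `|i⟩ ⊗ |y_i⟩`
and every two-element uniform superposition `(|i0⟩+|i⟩)/√2 ⊗ |0⟩` to
`(|i0⟩+|i⟩)/√2 ⊗ |y_{0,i}⟩`, then all `|y_i⟩` agree up to phase with `|y_{i0}⟩`;
hence there is a fixed `|y⟩` and phases `c_i` with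
`U(|x⟩ ⊗ |0⟩) = |x'⟩ ⊗ |y⟩` where `x'_i = c_i x_i`; and if moreover the partial
trace over `B` of the output is always `|x⟩⟨x|`, then `U(|x⟩ ⊗ |0⟩) = |x⟩ ⊗ |y⟩`
for all `|x⟩`. -/
theorem stmt_12 {ιA ιB : Type*} [Fintype ιA] [Fintype ιB] [DecidableEq ιA] [DecidableEq ιB]
    (i0 : ιA)
    (U : Matrix (ιA × ιB) (ιA × ιB) ℂ) (hU : U ∈ Matrix.unitaryGroup (ιA × ιB) ℂ)
    (b0 : ιB → ℂ) (hb0 : ∑ j, ‖b0 j‖ ^ 2 = 1)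
    (y : ιA → ιB → ℂ) (hy : ∀ i, ∑ j, ‖y i j‖ ^ 2 = 1)
    (hbasis : ∀ i : ιA,
      U.mulVec (fun p => (if p.1 = i then (1 : ℂ) else 0) * b0 p.2) =
        fun p => (if p.1 = i then (1 : ℂ) else 0) * y i p.2)
    (hsup : ∀ i : ιA, i ≠ i0 → ∃ y0i : ιB → ℂ, (∑ j, ‖y0i j‖ ^ 2 = 1) ∧
      U.mulVec (fun p =>
          ((if p.1 = i0 then (1 : ℂ) else 0) + (if p.1 = i then (1 : ℂ) else 0)) /
            (Real.sqrt 2 : ℂ) * b0 p.2) =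
        fun p =>
          ((if p.1 = i0 then (1 : ℂ) else 0) + (if p.1 = i then (1 : ℂ) else 0)) /
            (Real.sqrt 2 : ℂ) * y0i p.2) :
    (∀ i : ιA, ∃ c : ℂ, ‖c‖ = 1 ∧ y i = c • y i0) ∧
    (∃ c : ιA → ℂ, (∀ i, ‖c i‖ = 1) ∧ ∀ x : ιA → ℂ,
      U.mulVec (fun p => x p.1 * b0 p.2) = fun p => (c p.1 * x p.1) * y i0 p.2) ∧
    ((∀ x : ιA → ℂ, (∑ i, ‖x i‖ ^ 2 = 1) →
        (Matrix.of fun a a' : ιA =>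
            ∑ j : ιB, U.mulVec (fun p => x p.1 * b0 p.2) (a, j) *
              star (U.mulVec (fun p => x p.1 * b0 p.2) (a', j))) =
          Matrix.vecMulVec x (star x)) →
      ∀ x : ιA → ℂ,
        U.mulVec (fun p => x p.1 * b0 p.2) = fun p => x p.1 * y i0 p.2) := by
  have hs : (Real.sqrt 2 : ℂ) ≠ 0 := by
    exact_mod_cast Complex.ofReal_ne_zero.mpr (by positivity)
  -- key: all y i are equal to y i0
  have key : ∀ i, y i = y i0 := by
    intro i
    by_cases hi : i = i0
    · rw [hi]
    · obtain ⟨y0i, _, heq⟩ := hsup i hi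
      have hi' : i0 ≠ i := fun h => hi h.symm
      have hv : (fun p : ιA × ιB =>
          ((if p.1 = i0 then (1:ℂ) else 0) + (if p.1 = i then (1:ℂ) else 0)) /
            (Real.sqrt 2 : ℂ) * b0 p.2)
          = (Real.sqrt 2 : ℂ)⁻¹ •
              ((fun p : ιA × ιB => (if p.1 = i0 then (1:ℂ) else 0) * b0 p.2) +
               (fun p : ιA × ιB => (if p.1 = i then (1:ℂ) else 0) * b0 p.2)) := by
        funext p
        simp only [Pi.smul_apply, Pi.add_apply, smul_eq_mul, div_eq_inv_mul]
        ring
      rw [hv, Matrix.mulVec_smul, Matrix.mulVec_add, hbasis i0, hbasis i] at heq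
      funext j
      have h1 := congrFun heq (i0, j)
      have h2 := congrFun heq (i, j)
      simp only [Pi.smul_apply, Pi.add_apply, smul_eq_mul, if_pos rfl, hi, hi',
        if_true, if_false, one_mul, zero_mul, add_zero, zero_add,
        if_neg hi, if_neg hi', div_eq_inv_mul] at h1 h2
      have e1 : y i0 j = y0i j := by
        have := h1
        field_simp at this
        linear_combination this
      have e2 : y i j = y0i j := by
        field_simp at h2
        linear_combination h2
      rw [e2, ← e1]
  -- row sums from hbasis
  have hrow : ∀ (q : ιA × ιB) (i : ιA),
      ∑ j, U q (i, j) * b0 j = (if q.1 = i then (1:ℂ) else 0) * y i q.2 := by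
    intro q i
    have h := congrFun (hbasis i) q
    simpa [Matrix.mulVec, dotProduct, Fintype.sum_prod_type, mul_comm,
      mul_left_comm, mul_assoc] using h
  -- main formula
  have main : ∀ x : ιA → ℂ,
      U.mulVec (fun p => x p.1 * b0 p.2) = fun p => x p.1 * y i0 p.2 := by
    intro x
    funext q
    have step : U.mulVec (fun p => x p.1 * b0 p.2) q
        = ∑ i, x i * ((if q.1 = i then (1:ℂ) else 0) * y i q.2) := by
      simp only [Matrix.mulVec, dotProduct, Fintype.sum_prod_type]
      refine Finset.sum_congr rfl fun i _ => ?_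
      rw [← hrow q i, Finset.mul_sum]
      refine Finset.sum_congr rfl fun j _ => ?_
      ring
    rw [step]
    rw [Finset.sum_eq_single q.1]
    · simp [key q.1]
    · intro b _ hb
      simp [Ne.symm hb]
    · intro h
      exact absurd (Finset.mem_univ q.1) h
  refine ⟨fun i => ⟨1, by simp, by rw [one_smul]; exact key i⟩,
    ⟨fun _ => 1, fun i => by simp, fun x => by simpa using main x⟩,
    fun _ x => main x⟩
end
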